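/- arXiv:2506.22480 — 4 statements merged into one kernel-verified Lean document; each statement's English description precedes it below -/
import Mathlib

section
/- Let x_1, …, x_K ∈ ℝ^d, let T_1, …, T_K ≥ 0 and λ > 0 be real numbers, and set A = λ·I_d + Σ_{k=1}^{K} T_k · x_k x_kᵀ (which is positive definite). Let w_1, …, w_K ∈ ℝ satisfy w_k = 0 whenever T_k = 0, and set y = Σ_{k=1}^{K} w_k x_k. Then yᵀ A⁻¹ y ≤ Σ_{k : T_k > 0} w_k² / T_k. -/
/-!
Put `z = A⁻¹ y`, so that `q := yᵀ A⁻¹ y = y ⬝ z = Σ_k w_k (x_k ⬝ z)`, and also `q = zᵀ A z`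
because `A z = y`. Only the arms with `T_k > 0` contribute to `y`, and on them the weighted
Cauchy–Schwarz inequality gives `q² ≤ (Σ_k w_k² / T_k) · Σ_k T_k (x_k ⬝ z)²`, while
`A ⪰ Σ_k T_k x_k x_kᵀ` bounds the last sum by `zᵀ A z = q`. Hence `q² ≤ c q` with
`c = Σ_k w_k² / T_k ≥ 0`, which forces `q ≤ c`.
-/

open Matrix Finset

section

variable {ι n R : Type*} [Fintype n]

theorem dotProduct_vecMulVec_self_mulVec [CommRing R] (u v : n → R) :
    v ⬝ᵥ (vecMulVec u u *ᵥ v) = (u ⬝ᵥ v) ^ 2 := by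
  rw [vecMulVec_mulVec, op_smul_eq_smul, dotProduct_smul, smul_eq_mul, dotProduct_comm v u, sq]

theorem dotProduct_smul_one_add_sum_smul_vecMulVec_self_mulVec [CommRing R] [DecidableEq n]
    [Fintype ι] (lam : R) (T : ι → R) (x : ι → n → R) (v : n → R) :
    v ⬝ᵥ ((lam • 1 + ∑ k, T k • vecMulVec (x k) (x k)) *ᵥ v) =
      lam * (v ⬝ᵥ v) + ∑ k, T k * (x k ⬝ᵥ v) ^ 2 := by
  simp only [add_mulVec, smul_mulVec, one_mulVec, sum_mulVec, dotProduct_add, dotProduct_smul,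
    dotProduct_sum, smul_eq_mul, dotProduct_vecMulVec_self_mulVec]

theorem posDef_smul_one_add_sum_smul_vecMulVec_self [DecidableEq n] [Fintype ι] {lam : ℝ}
    (hlam : 0 < lam) {T : ι → ℝ} (hT : ∀ k, 0 ≤ T k) (x : ι → n → ℝ) :
    (lam • 1 + ∑ k, T k • vecMulVec (x k) (x k)).PosDef :=
  (PosDef.one.smul hlam).add_posSemidef <| posSemidef_sum _ fun k _ =>
    (posSemidef_vecMulVec_self_star (x k)).smul (hT k)

variable [Field R] [LinearOrder R] [IsStrictOrderedRing R]

theorem sq_sum_mul_le_sum_sq_div_mul_sum_mul_sq (s : Finset ι) (w a : ι → R) {T : ι → R}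
    (hT : ∀ k ∈ s, 0 < T k) :
    (∑ k ∈ s, w k * a k) ^ 2 ≤ (∑ k ∈ s, w k ^ 2 / T k) * ∑ k ∈ s, T k * a k ^ 2 :=
  sum_sq_le_sum_mul_sum_of_sq_le_mul s (fun k hk => div_nonneg (sq_nonneg _) (hT k hk).le)
    (fun k hk => mul_nonneg (hT k hk).le (sq_nonneg _)) fun k hk => by
      rw [← mul_assoc, div_mul_cancel₀ _ (hT k hk).ne', mul_pow]

theorem dotProduct_inv_mulVec_le_sum_sq_div [DecidableEq n] {A : Matrix n n R}
    (hA : IsUnit A.det) (s : Finset ι) (x : ι → n → R) {T : ι → R} (hT : ∀ k ∈ s, 0 < T k)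
    (hdom : ∀ z, ∑ k ∈ s, T k * (x k ⬝ᵥ z) ^ 2 ≤ z ⬝ᵥ (A *ᵥ z)) (w : ι → R) :
    (∑ k ∈ s, w k • x k) ⬝ᵥ (A⁻¹ *ᵥ ∑ k ∈ s, w k • x k) ≤ ∑ k ∈ s, w k ^ 2 / T k := by
  set y := ∑ k ∈ s, w k • x k
  set z := A⁻¹ *ᵥ y
  set c := ∑ k ∈ s, w k ^ 2 / T k
  have hc : 0 ≤ c := sum_nonneg fun k hk => div_nonneg (sq_nonneg _) (hT k hk).le
  have hq : y ⬝ᵥ z = ∑ k ∈ s, w k * (x k ⬝ᵥ z) := by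
    simp only [y, sum_dotProduct, smul_dotProduct, smul_eq_mul]
  have hAz : z ⬝ᵥ (A *ᵥ z) = y ⬝ᵥ z := by
    rw [mulVec_mulVec, mul_nonsing_inv _ hA, one_mulVec, dotProduct_comm]
  have key : (y ⬝ᵥ z) ^ 2 ≤ c * (y ⬝ᵥ z) :=
    calc (y ⬝ᵥ z) ^ 2 ≤ c * ∑ k ∈ s, T k * (x k ⬝ᵥ z) ^ 2 :=
          hq ▸ sq_sum_mul_le_sum_sq_div_mul_sum_mul_sq s w _ hT
      _ ≤ c * (y ⬝ᵥ z) := by gcongr; exact hAz ▸ hdom z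
  nlinarith

end

/-- If `A = λ I + Σ_k T_k x_k x_kᵀ`, `y = Σ_k w_k x_k` with `w_k = 0` whenever `T_k = 0`,
then `yᵀ A⁻¹ y ≤ Σ_{k : T_k > 0} w_k² / T_k`. -/
theorem inv_quadratic_form_allocation_bound (d K : ℕ)
    (x : Fin K → (Fin d → ℝ)) (T : Fin K → ℝ) (lam : ℝ)
    (hT : ∀ k, 0 ≤ T k) (hlam : 0 < lam)
    (w : Fin K → ℝ) (hw : ∀ k, T k = 0 → w k = 0)
    (A : Matrix (Fin d) (Fin d) ℝ)
    (hA : A = lam • (1 : Matrix (Fin d) (Fin d) ℝ) + ∑ k, T k • vecMulVec (x k) (x k))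
    (y : Fin d → ℝ) (hy : y = ∑ k, w k • x k) :
    y ⬝ᵥ (A⁻¹ *ᵥ y) ≤ ∑ k ∈ Finset.univ.filter (fun k => 0 < T k), (w k) ^ 2 / T k := by
  set s := univ.filter fun k => 0 < T k
  have hys : y = ∑ k ∈ s, w k • x k := by
    rw [hy, sum_filter_of_ne]
    intro k _ hk
    exact (hT k).lt_of_ne' fun h => hk (by rw [hw k h, zero_smul])
  have hdet : IsUnit A.det :=
    (isUnit_iff_isUnit_det A).mp (hA ▸ posDef_smul_one_add_sum_smul_vecMulVec_self hlam hT x).isUnit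
  have hdom : ∀ z, ∑ k ∈ s, T k * (x k ⬝ᵥ z) ^ 2 ≤ z ⬝ᵥ (A *ᵥ z) := fun z => by
    rw [hA, dotProduct_smul_one_add_sum_smul_vecMulVec_self_mulVec]
    have hz : 0 ≤ lam * (z ⬝ᵥ z) :=
      mul_nonneg hlam.le (by simpa using dotProduct_star_self_nonneg z)
    exact le_add_of_nonneg_of_le hz <| sum_le_sum_of_subset_of_nonneg (filter_subset _ univ)
      fun k _ _ => mul_nonneg (hT k) (sq_nonneg _)
  rw [hys]
  exact dotProduct_inv_mulVec_le_sum_sq_div hdet s x (fun k hk => (mem_filter.mp hk).2) hdom w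
end

section
/- Let P be a natural number, let n_1, …, n_P and g_1, …, g_P be positive real numbers, and let D, τ, G be positive real numbers such that n_p · g_p > D for every p ∈ {1, …, P}, Σ_{p=1}^{P} n_p ≤ τ, and Σ_{p=1}^{P} g_p ≤ G. Then for every γ > 0, P ≤ τ/γ + γ·G/D; consequently P ≤ 2·√(τ·G/D). -/
open Finset

/-! Every epoch satisfies `1 ≤ n_p / γ + γ g_p / D`: either `n_p ≥ γ`, or `n_p < γ` and then
`g_p > D / n_p > D / γ`. Summing over the epochs gives `P ≤ τ / γ + γ G / D`, and
`γ = √(τ D / G)` balances the two terms. -/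

lemma one_le_div_add_mul_div {x y D γ : ℝ} (hx : 0 ≤ x) (hy : 0 ≤ y) (hγ : 0 < γ) (hD : 0 < D)
    (hxy : D ≤ x * y) : 1 ≤ x / γ + γ * y / D := by
  rcases le_or_gt γ x with hγx | hxγ
  · have h₁ : 1 ≤ x / γ := (one_le_div hγ).2 hγx
    have h₂ : 0 ≤ γ * y / D := by positivity
    linarith
  · have h₁ : 0 ≤ x / γ := by positivity
    have h₂ : 1 ≤ γ * y / D := (one_le_div hD).2 <| hxy.trans <| by gcongr
    linarith

theorem card_le_sum_div_add_mul_sum_div {ι : Type*} (s : Finset ι) {x y : ι → ℝ} {D γ : ℝ}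
    (hx : ∀ i ∈ s, 0 ≤ x i) (hy : ∀ i ∈ s, 0 ≤ y i) (hγ : 0 < γ) (hD : 0 < D)
    (hxy : ∀ i ∈ s, D ≤ x i * y i) :
    (#s : ℝ) ≤ (∑ i ∈ s, x i) / γ + γ * (∑ i ∈ s, y i) / D := by
  calc (#s : ℝ) = ∑ _i ∈ s, (1 : ℝ) := by simp
    _ ≤ ∑ i ∈ s, (x i / γ + γ * y i / D) := sum_le_sum fun i hi =>
        one_le_div_add_mul_div (hx i hi) (hy i hi) hγ hD (hxy i hi)
    _ = (∑ i ∈ s, x i) / γ + γ * (∑ i ∈ s, y i) / D := by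
        rw [sum_add_distrib, sum_div, mul_sum, sum_div]

theorem le_two_sqrt_mul_of_forall_le_div_add_mul {a b c : ℝ} (ha : 0 < a) (hb : 0 < b)
    (h : ∀ γ : ℝ, 0 < γ → c ≤ a / γ + γ * b) : c ≤ 2 * √(a * b) := by
  have hsa : 0 < √a := Real.sqrt_pos.2 ha
  have hsb : 0 < √b := Real.sqrt_pos.2 hb
  have hbal₁ : a / (√a / √b) = √a * √b := by
    field_simp
    rw [Real.sq_sqrt ha.le]
  have hbal₂ : √a / √b * b = √a * √b := by
    field_simp
    rw [Real.sq_sqrt hb.le]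
  have := h (√a / √b) (div_pos hsa hsb)
  rw [Real.sqrt_mul ha.le]
  linarith

/-- Counting lemma for communication epochs: if `n_p · g_p > D` for every epoch,
`Σ n_p ≤ τ` and `Σ g_p ≤ G`, then `P ≤ τ/γ + γG/D` for every `γ > 0`,
and consequently `P ≤ 2√(τG/D)`. -/
theorem epoch_counting_bound (P : ℕ) (n g : Fin P → ℝ) (D τ G : ℝ)
    (hn : ∀ p, 0 < n p) (hg : ∀ p, 0 < g p)
    (hD : 0 < D) (hτ : 0 < τ) (hG : 0 < G)
    (htrig : ∀ p, D < n p * g p)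
    (hsum_n : ∑ p, n p ≤ τ) (hsum_g : ∑ p, g p ≤ G) :
    (∀ γ : ℝ, 0 < γ → (P : ℝ) ≤ τ / γ + γ * G / D) ∧
      (P : ℝ) ≤ 2 * Real.sqrt (τ * G / D) := by
  have hcount : ∀ γ : ℝ, 0 < γ → (P : ℝ) ≤ τ / γ + γ * G / D := fun γ hγ => by
    have h := card_le_sum_div_add_mul_sum_div univ (fun p _ => (hn p).le) (fun p _ => (hg p).le)
      hγ hD (fun p _ => (htrig p).le)
    rw [card_univ, Fintype.card_fin] at h
    exact h.trans (by gcongr)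
  refine ⟨hcount, ?_⟩
  have h := le_two_sqrt_mul_of_forall_le_div_add_mul hτ (div_pos hG hD) fun γ hγ => by
    rw [← mul_div_assoc]
    exact hcount γ hγ
  rwa [← mul_div_assoc] at h
end

section
/- Let x_1, …, x_K ∈ ℝ^d with K ≥ 2, and let θ*, θ̂ ∈ ℝ^d. For i, j ∈ {1, …, K}, define the true gap Δ(i,j) = (x_i − x_j)ᵀθ* and the estimated gap Δ̂(i,j) = (x_i − x_j)ᵀθ̂. Let a* ∈ {1, …, K} be a maximizer of a ↦ x_aᵀθ*, and set Δ_i = (x_{a*} − x_i)ᵀθ* for all i. Let β : {1,…,K} × {1,…,K} → ℝ satisfy β(i,j) = β(j,i) ≥ 0 and β(i,i) = 0 for all i, j, and assume the good event holds: |Δ(i,j) − Δ̂(i,j)| ≤ β(i,j) for all i, j. Let i_t be a maximizer of i ↦ x_iᵀθ̂, let j_t be a maximizer of j ↦ Δ̂(j, i_t) + β(j, i_t), and set B = Δ̂(j_t, i_t) + β(j_t, i_t). Then: if i_t = a* or j_t = a*, B ≤ min(0, −max(Δ_{i_t}, Δ_{j_t}) + β(i_t, j_t)) + β(i_t, j_t);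 otherwise, B ≤ min(0, −max(Δ_{i_t}, Δ_{j_t}) + 2·β(i_t, j_t)) + β(i_t, j_t). -/
/-!
Write `μ i = x i ⬝ᵥ θ*` and `μ̂ i = x i ⬝ᵥ θ̂`, so that `Δ i j = μ i - μ j`, `Δ̂ i j = μ̂ i - μ̂ j`
and `B = μ̂ jt - μ̂ it + β jt it`. Three inequalities carry the argument:
`B ≤ β(it, jt)` because `it` maximizes `μ̂`; `gap it ≤ B` because `B` dominates the upper confidence
bound `Δ̂(a*, it) + β(a*, it)` of the true gap `Δ(a*, it) = gap it`; and
`B ≤ Δ(jt, it) + 2 β(it, jt) = gap it - gap jt + 2 β(it, jt)` on the good event. Together with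
`0 ≤ β` they bound `B + gap it` and `B + gap jt`, which is what the claimed bound amounts to; when
`it` or `jt` is `a*`, its gap vanishes and one width `β` is saved.
-/

open Matrix

theorem le_min_zero_neg_max_add {B a b k c : ℝ} (hc : B ≤ c) (ha : a + B ≤ k + c)
    (hb : b + B ≤ k + c) : B ≤ min 0 (-max a b + k) + c := by
  rw [← min_add_add_right, le_min_iff, zero_add]
  exact ⟨hc, by linarith [max_le_iff.mpr ⟨ha, hb⟩, max_add_add_right a b B]⟩

theorem stopping_index_bound_general (d K : ℕ)
    (x : Fin K → (Fin d → ℝ)) (θstar θhat : Fin d → ℝ)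
    (Δ Δhat : Fin K → Fin K → ℝ)
    (hΔ : ∀ i j, Δ i j = (x i - x j) ⬝ᵥ θstar)
    (hΔhat : ∀ i j, Δhat i j = (x i - x j) ⬝ᵥ θhat)
    (astar : Fin K)
    (gap : Fin K → ℝ) (hgap : ∀ i, gap i = (x astar - x i) ⬝ᵥ θstar)
    (β : Fin K → Fin K → ℝ)
    (hβsymm : ∀ i j, β i j = β j i) (hβnonneg : ∀ i j, 0 ≤ β i j)
    (hgood : ∀ i j, |Δ i j - Δhat i j| ≤ β i j)
    (it : Fin K) (hit : ∀ i, x i ⬝ᵥ θhat ≤ x it ⬝ᵥ θhat)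
    (jt : Fin K) (hjt : ∀ j, Δhat j it + β j it ≤ Δhat jt it + β jt it)
    (B : ℝ) (hB : B = Δhat jt it + β jt it) :
    (it = astar ∨ jt = astar →
      B ≤ min 0 (-(max (gap it) (gap jt)) + β it jt) + β it jt) ∧
    (it ≠ astar ∧ jt ≠ astar →
      B ≤ min 0 (-(max (gap it) (gap jt)) + 2 * β it jt) + β it jt) := by
  simp only [sub_dotProduct] at hΔ hΔhat hgap
  have hβ : 0 ≤ β it jt := hβnonneg it jt
  have hwidth : B ≤ β it jt := by
    rw [hB, hΔhat, ← hβsymm]; linarith [hit jt]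
  have hlower : gap it ≤ B := by
    have h := (abs_le.mp (hgood astar it)).2
    rw [hΔ, ← hgap] at h
    linarith [hjt astar]
  have hupper : B ≤ gap it - gap jt + 2 * β it jt := by
    have h := (abs_le.mp (hgood jt it)).1
    rw [hΔ, hβsymm] at h
    rw [hB, hgap, hgap, hβsymm]
    linarith
  have hgap_astar : gap astar = 0 := by rw [hgap, sub_self]
  refine ⟨?_, fun _ => le_min_zero_neg_max_add hwidth (by linarith) (by linarith)⟩
  rintro (rfl | rfl) <;> exact le_min_zero_neg_max_add hwidth (by linarith) (by linarith)

/-- Bound on the stopping index `B` of (Dist)LinGapE under the good event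
(Lemma 3 of the paper, after Xu et al.). -/
theorem stopping_index_bound (d K : ℕ) (hK : 2 ≤ K)
    (x : Fin K → (Fin d → ℝ)) (θstar θhat : Fin d → ℝ)
    (Δ Δhat : Fin K → Fin K → ℝ)
    (hΔ : ∀ i j, Δ i j = (x i - x j) ⬝ᵥ θstar)
    (hΔhat : ∀ i j, Δhat i j = (x i - x j) ⬝ᵥ θhat)
    (astar : Fin K) (hastar : ∀ a, x a ⬝ᵥ θstar ≤ x astar ⬝ᵥ θstar)
    (gap : Fin K → ℝ) (hgap : ∀ i, gap i = (x astar - x i) ⬝ᵥ θstar)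
    (β : Fin K → Fin K → ℝ)
    (hβsymm : ∀ i j, β i j = β j i) (hβnonneg : ∀ i j, 0 ≤ β i j)
    (hβdiag : ∀ i, β i i = 0)
    (hgood : ∀ i j, |Δ i j - Δhat i j| ≤ β i j)
    (it : Fin K) (hit : ∀ i, x i ⬝ᵥ θhat ≤ x it ⬝ᵥ θhat)
    (jt : Fin K) (hjt : ∀ j, Δhat j it + β j it ≤ Δhat jt it + β jt it)
    (B : ℝ) (hB : B = Δhat jt it + β jt it) :
    (it = astar ∨ jt = astar →
      B ≤ min 0 (-(max (gap it) (gap jt)) + β it jt) + β it jt) ∧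
    (it ≠ astar ∧ jt ≠ astar →
      B ≤ min 0 (-(max (gap it) (gap jt)) + 2 * β it jt) + β it jt) :=
  stopping_index_bound_general d K x θstar θhat Δ Δhat hΔ hΔhat astar gap hgap β hβsymm hβnonneg
    hgood it hit jt hjt B hB
end

section
/- Let x_1, …, x_K ∈ ℝ^d with K ≥ 1, and let θ*, θ̂ ∈ ℝ^d. For i, j ∈ {1, …, K}, define Δ(i,j) = (x_i − x_j)ᵀθ* and Δ̂(i,j) = (x_i − x_j)ᵀθ̂, and let β : {1,…,K} × {1,…,K} → ℝ be nonnegative. Assume |Δ(i,j) − Δ̂(i,j)| ≤ β(i,j) for all i, j. Let â ∈ {1, …, K} be a maximizer of i ↦ x_iᵀθ̂, and let ε ≥ 0. If max_{j ∈ {1,…,K}} ( Δ̂(j, â) + β(j, â) ) ≤ ε, then for every a* ∈ {1, …, K} maximizing a ↦ x_aᵀθ*, we have (x_{a*} − x_{â})ᵀθ* ≤ ε. -/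
open Matrix

theorem recommended_arm_eps_optimal_general (d K : ℕ)
    (x : Fin K → (Fin d → ℝ)) (θstar : Fin d → ℝ)
    (Δ Δhat : Fin K → Fin K → ℝ)
    (hΔ : ∀ i j, Δ i j = (x i - x j) ⬝ᵥ θstar)
    (β : Fin K → Fin K → ℝ)
    (hgood : ∀ i j, |Δ i j - Δhat i j| ≤ β i j)
    (ahat : Fin K)
    (ε : ℝ)
    (hstop : ∀ j, Δhat j ahat + β j ahat ≤ ε) :
    ∀ astar : Fin K, (∀ a, x a ⬝ᵥ θstar ≤ x astar ⬝ᵥ θstar) →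
      (x astar - x ahat) ⬝ᵥ θstar ≤ ε := by
  intro astar _
  calc (x astar - x ahat) ⬝ᵥ θstar = Δ astar ahat := (hΔ astar ahat).symm
    _ ≤ Δhat astar ahat + β astar ahat :=
      sub_le_iff_le_add'.mp ((le_abs_self _).trans (hgood astar ahat))
    _ ≤ ε := hstop astar

/-- Deterministic core of Theorem 1: if the good event holds and the stopping
condition `max_j (Δ̂(j, â) + β(j, â)) ≤ ε` is met, the recommended arm `â`
is `ε`-optimal. -/
theorem recommended_arm_eps_optimal (d K : ℕ) (hK : 1 ≤ K)
    (x : Fin K → (Fin d → ℝ)) (θstar θhat : Fin d → ℝ)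
    (Δ Δhat : Fin K → Fin K → ℝ)
    (hΔ : ∀ i j, Δ i j = (x i - x j) ⬝ᵥ θstar)
    (hΔhat : ∀ i j, Δhat i j = (x i - x j) ⬝ᵥ θhat)
    (β : Fin K → Fin K → ℝ) (hβnonneg : ∀ i j, 0 ≤ β i j)
    (hgood : ∀ i j, |Δ i j - Δhat i j| ≤ β i j)
    (ahat : Fin K) (hahat : ∀ i, x i ⬝ᵥ θhat ≤ x ahat ⬝ᵥ θhat)
    (ε : ℝ) (hε : 0 ≤ ε)
    (hstop : ∀ j, Δhat j ahat + β j ahat ≤ ε) :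
    ∀ astar : Fin K, (∀ a, x a ⬝ᵥ θstar ≤ x astar ⬝ᵥ θstar) →
      (x astar - x ahat) ⬝ᵥ θstar ≤ ε :=
  recommended_arm_eps_optimal_general d K x θstar Δ Δhat hΔ β hgood ahat ε hstop
end
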